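/- (Young's characterization) Let (P^ε)_{ε≥0} be a regular perturbed Markov process on a finite set Ω. A state z ∈ Ω is stochastically stable if and only if there exists a tree rooted at z whose resistance is minimal among the resistances of all rooted trees (over all possible roots). -/

import Mathlib

/-!
By the Markov chain tree theorem, the stationary distribution of `P^ε` is proportional to
`W_z(ε) = ∑_f ∏_{v ≠ z} P^ε_{v f(v)}`, the sum over the spanning arborescences `f` rooted at `z`.
Each allowed transition is `Θ(ε^{r(x,y)})`, so `W_z(ε) = Θ(ε^{γ(z)})` where `γ(z)` is the least
resistance of a tree rooted at `z`, and hence `μ^ε(z) = Θ(ε^{γ(z) - min γ})`. This stays away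
from `0` exactly when `γ(z)` is the minimum.

The tree theorem itself: both sides of the balance equation at `z` enumerate the maps `g : Ω → Ω`
whose functional graph is a single cycle through `z` with trees hanging off it, obtained from an
arborescence by adding one edge either out of its root (`∑_y W_z P_{zy}`) or into `z`
(`∑_x W_x P_{xz}`).
-/

open Classical Filter Finset

set_option linter.unusedSectionVars false

noncomputable section

namespace Young

variable {Ω : Type*} [Fintype Ω] [DecidableEq Ω]

/-- `pathOK T a z l` : `l` is the list of successive vertices of a directed path
from `a` to `z` using transitions from `T`. -/
def pathOK (T : Set (Ω × Ω)) (a z : Ω) : List Ω → Prop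
  | [] => a = z
  | b :: l => (a, b) ∈ T ∧ pathOK T b z l

/-- A transition is non-forbidden if it has positive probability for some
(equivalently, by regularity, for all) `ε > 0`. -/
def Allowed (P : ℝ → Matrix Ω Ω ℝ) (x y : Ω) : Prop := ∃ ε > (0 : ℝ), 0 < P ε x y

def IsRootedTree (P : ℝ → Matrix Ω Ω ℝ) (T : Finset (Ω × Ω)) (z : Ω) : Prop :=
  (∀ p ∈ T, Allowed P p.1 p.2) ∧
  (∀ w : Ω, w ≠ z → ∃! l : List Ω, pathOK (↑T : Set (Ω × Ω)) w z l)

def treeRes (res : Ω → Ω → ℝ) (T : Finset (Ω × Ω)) : ℝ := ∑ p ∈ T, res p.1 p.2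

open Asymptotics Topology
open scoped Matrix

section Arborescence

/-- A spanning arborescence rooted at `z`, given by its parent map; `f z = z` is a placeholder. -/
def IsArborescence (f : Ω → Ω) (z : Ω) : Prop := f z = z ∧ ∀ v, ∃ n, f^[n] v = z

/-- The functional graph of `g` is a single cycle through `z` with trees hanging off it. -/
def IsUnicyclicThrough (g : Ω → Ω) (z : Ω) : Prop := ∀ v, ∃ n, 0 < n ∧ g^[n] v = z

variable {f g : Ω → Ω} {x z : Ω}

lemma iterate_eq_of_forall_iterate_ne (hfg : ∀ w, w ≠ x → f w = g w) {v : Ω} :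
    ∀ {k : ℕ}, (∀ j < k, g^[j] v ≠ x) → f^[k] v = g^[k] v
  | 0, _ => rfl
  | k + 1, hv => by
    rw [Function.iterate_succ_apply', Function.iterate_succ_apply',
      iterate_eq_of_forall_iterate_ne hfg fun j hj => hv j (Nat.lt_succ_of_lt hj),
      hfg _ (hv k (Nat.lt_succ_self k))]

lemma iterate_find_eq_of_forall_ne (hfg : ∀ w, w ≠ x → f w = g w) {v : Ω}
    (h : ∃ n, g^[n] v = x) : f^[Nat.find h] v = x := by
  rw [iterate_eq_of_forall_iterate_ne hfg fun j hj => Nat.find_min h hj]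
  exact Nat.find_spec h

lemma isArborescence_update_self (h : ∀ v, ∃ n, g^[n] v = x) :
    IsArborescence (Function.update g x x) x :=
  ⟨Function.update_self x x g, fun v =>
    ⟨_, iterate_find_eq_of_forall_ne (fun _ hw => Function.update_of_ne hw x g) (h v)⟩⟩

lemma IsArborescence.update_isUnicyclicThrough (hf : IsArborescence f x) (z : Ω) :
    IsUnicyclicThrough (Function.update f x z) z := fun v =>
  ⟨Nat.find (hf.2 v) + 1, Nat.succ_pos _, by
    rw [Function.iterate_succ_apply',
      iterate_find_eq_of_forall_ne (fun _ hw => Function.update_of_ne hw z f) (hf.2 v),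
      Function.update_self]⟩

lemma IsArborescence.update_root_isUnicyclicThrough (hf : IsArborescence f z) (y : Ω) :
    IsUnicyclicThrough (Function.update f z y) z := by
  have hfg : ∀ w, w ≠ z → Function.update f z y w = f w := fun _ hw =>
    Function.update_of_ne hw y f
  intro v
  by_cases hv : v = z
  · subst hv
    refine ⟨Nat.find (hf.2 y) + 1, Nat.succ_pos _, ?_⟩
    rw [Function.iterate_succ_apply, Function.update_self,
      iterate_find_eq_of_forall_ne hfg (hf.2 y)]
  · exact ⟨_, Nat.pos_of_ne_zero fun h0 => hv ((Nat.find_eq_zero (hf.2 v)).1 h0),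
      iterate_find_eq_of_forall_ne hfg (hf.2 v)⟩

/-- The vertex preceding `z` on the cycle of `g` through `z`. -/
def cyclePred (g : Ω → Ω) (z : Ω) : Ω :=
  if h : ∃ n, 0 < n ∧ g^[n] z = z then g^[Nat.find h - 1] z else z

lemma IsUnicyclicThrough.apply_cyclePred (hg : IsUnicyclicThrough g z) :
    g (cyclePred g z) = z := by
  have h := hg z
  rw [cyclePred, dif_pos h, ← Function.iterate_succ_apply' g, Nat.succ_eq_add_one,
    Nat.sub_add_cancel (Nat.find_spec h).1]
  exact (Nat.find_spec h).2

lemma IsUnicyclicThrough.exists_iterate_eq_cyclePred (hg : IsUnicyclicThrough g z) (v : Ω) :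
    ∃ n, g^[n] v = cyclePred g z := by
  obtain ⟨n, -, hn⟩ := hg v
  have h := hg z
  exact ⟨Nat.find h - 1 + n, by rw [Function.iterate_add_apply, hn, cyclePred, dif_pos h]⟩

lemma IsArborescence.cyclePred_update (hf : IsArborescence f x) :
    cyclePred (Function.update f x z) z = x := by
  set g := Function.update f x z
  have hgf : ∀ w, w ≠ x → g w = f w := fun _ hw => Function.update_of_ne hw z f
  have hx := hf.2 z
  set n := Nat.find hx
  have hgn : g^[n] z = x := iterate_find_eq_of_forall_ne hgf hx
  have hret : g^[n + 1] z = z := by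
    rw [Function.iterate_succ_apply', hgn]
    exact Function.update_self x z f
  have h : ∃ m, 0 < m ∧ g^[m] z = z := ⟨n + 1, Nat.succ_pos n, hret⟩
  -- An earlier return `g^[m] z = z`, `m ≤ n`, would let `f` reach `x` from `z` in `n - m` steps.
  have hmin : n + 1 ≤ Nat.find h := by
    by_contra! hlt
    obtain ⟨hm0, hm⟩ := Nat.find_spec h
    have hle : Nat.find h ≤ n := Nat.lt_succ_iff.1 hlt
    have hfm : f^[Nat.find h] z = z := by
      rwa [← iterate_eq_of_forall_iterate_ne hgf fun j hj => Nat.find_min hx (hj.trans_le hle)]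
    have hfx : f^[n] z = x := Nat.find_spec hx
    rw [← Nat.sub_add_cancel hle, Function.iterate_add_apply, hfm] at hfx
    exact Nat.find_min hx (Nat.sub_lt_of_pos_le hm0 hle) hfx
  rw [cyclePred, dif_pos h, le_antisymm (Nat.find_min' h ⟨Nat.succ_pos n, hret⟩) hmin,
    Nat.succ_sub_one, hgn]

lemma prod_apply_update {M : Type*} [CommMonoid M] (w : Ω → Ω → M) (f : Ω → Ω) (x y : Ω) :
    ∏ v, w v (Function.update f x y v) = w x y * ∏ v ∈ univ.erase x, w v (f v) := by
  rw [← mul_prod_erase univ _ (mem_univ x), Function.update_self]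
  congr 1
  exact prod_congr rfl fun v hv => by rw [Function.update_of_ne (ne_of_mem_erase hv)]

def arborescences (z : Ω) : Finset (Ω → Ω) := univ.filter (IsArborescence · z)

def unicyclicThrough (z : Ω) : Finset (Ω → Ω) := univ.filter (IsUnicyclicThrough · z)

@[simp]
lemma mem_arborescences : f ∈ arborescences z ↔ IsArborescence f z := by
  simp [arborescences]

@[simp]
lemma mem_unicyclicThrough : g ∈ unicyclicThrough z ↔ IsUnicyclicThrough g z := by
  simp [unicyclicThrough]

variable {R : Type*} [CommSemiring R]

def arborescenceWeight (P : Matrix Ω Ω R) (z : Ω) (f : Ω → Ω) : R :=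
  ∏ v ∈ univ.erase z, P v (f v)

def treeMass (P : Matrix Ω Ω R) (z : Ω) : R := ∑ f ∈ arborescences z, arborescenceWeight P z f

lemma sum_treeMass_mul_eq_sum_unicyclic (P : Matrix Ω Ω R) (z : Ω) :
    ∑ x, treeMass P x * P x z = ∑ g ∈ unicyclicThrough z, ∏ v, P v (g v) := by
  simp_rw [treeMass, sum_mul]
  rw [sum_sigma']
  refine sum_nbij' (fun p => Function.update p.2 p.1 z)
    (fun g => ⟨cyclePred g z, Function.update g (cyclePred g z) (cyclePred g z)⟩)
    (fun ⟨x, f⟩ hf => ?_) (fun g hg => ?_) (fun ⟨x, f⟩ hf => ?_) (fun g hg => ?_)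
    (fun ⟨x, f⟩ _ => ?_)
  · simp only [mem_sigma, mem_univ, true_and, mem_arborescences] at hf
    exact mem_unicyclicThrough.2 (hf.update_isUnicyclicThrough z)
  · rw [mem_unicyclicThrough] at hg
    simpa using isArborescence_update_self hg.exists_iterate_eq_cyclePred
  · simp only [mem_sigma, mem_univ, true_and, mem_arborescences] at hf
    simp only [hf.cyclePred_update, Function.update_idem,
      (Function.update_eq_self_iff (f := f)).2 hf.1.symm]
  · rw [mem_unicyclicThrough] at hg
    rw [Function.update_idem, (Function.update_eq_self_iff (f := g)).2 hg.apply_cyclePred.symm]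
  · rw [prod_apply_update (fun a b => P a b), arborescenceWeight, mul_comm]

lemma treeMass_eq_sum_unicyclic {P : Matrix Ω Ω R} (hrow : ∀ x, ∑ y, P x y = 1) (z : Ω) :
    treeMass P z = ∑ g ∈ unicyclicThrough z, ∏ v, P v (g v) := by
  have hsplit : treeMass P z = ∑ f ∈ arborescences z, ∑ y, arborescenceWeight P z f * P z y := by
    simp_rw [← mul_sum, hrow, mul_one, treeMass]
  rw [hsplit, ← sum_product']
  refine sum_nbij' (fun p => Function.update p.1 z p.2) (fun g => (Function.update g z z, g z))
    (fun ⟨f, y⟩ hf => ?_) (fun g hg => ?_) (fun ⟨f, y⟩ hf => ?_) (fun g _ => ?_)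
    (fun ⟨f, y⟩ _ => ?_)
  · simp only [mem_product, mem_univ, and_true, mem_arborescences] at hf
    exact mem_unicyclicThrough.2 (hf.update_root_isUnicyclicThrough y)
  · rw [mem_unicyclicThrough] at hg
    simpa using isArborescence_update_self fun v => (hg v).imp fun _ => And.right
  · simp only [mem_product, mem_univ, and_true, mem_arborescences] at hf
    simp only [Function.update_idem, (Function.update_eq_self_iff (f := f)).2 hf.1.symm,
      Function.update_self]
  · rw [Function.update_idem, Function.update_eq_self]
  · rw [prod_apply_update (fun a b => P a b), arborescenceWeight, mul_comm]

theorem treeMass_vecMul {P : Matrix Ω Ω R} (hrow : ∀ x, ∑ y, P x y = 1) :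
    treeMass P ᵥ* P = treeMass P :=
  funext fun z => (sum_treeMass_mul_eq_sum_unicyclic P z).trans
    (treeMass_eq_sum_unicyclic hrow z).symm

end Arborescence

section Stationary

lemma vecMul_pow_eq_self {R : Type*} [Semiring R] {P : Matrix Ω Ω R} {v : Ω → R}
    (h : v ᵥ* P = v) : ∀ n : ℕ, v ᵥ* P ^ n = v
  | 0 => by rw [pow_zero, Matrix.vecMul_one]
  | n + 1 => by rw [pow_succ, ← Matrix.vecMul_vecMul, vecMul_pow_eq_self h n, h]

variable {P : Matrix Ω Ω ℝ} (hnonneg : ∀ x y, 0 ≤ P x y) (hirr : ∀ x y, ∃ n : ℕ, 0 < (P ^ n) x y)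
include hnonneg hirr

lemma eq_zero_of_vecMul_eq_self {v : Ω → ℝ} (hv0 : ∀ x, 0 ≤ v x) (hv : v ᵥ* P = v) {z : Ω}
    (hz : v z = 0) (x : Ω) : v x = 0 := by
  obtain ⟨n, hn⟩ := hirr x z
  have hsum : ∑ w, v w * (P ^ n) w z = 0 := (congrFun (vecMul_pow_eq_self hv n) z).trans hz
  have hx := (sum_eq_zero_iff_of_nonneg fun w _ =>
    mul_nonneg (hv0 w) (Matrix.pow_apply_nonneg hnonneg n w z)).1 hsum x (mem_univ x)
  exact (mul_eq_zero.1 hx).resolve_right hn.ne'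

lemma eq_of_vecMul_eq_self [Nonempty Ω] {μ ν : Ω → ℝ}
    (hμ0 : ∀ x, 0 ≤ μ x) (hμ1 : ∑ x, μ x = 1) (hμ : μ ᵥ* P = μ)
    (hν1 : ∑ x, ν x = 1) (hν : ν ᵥ* P = ν) : μ = ν := by
  have hμpos : ∀ x, 0 < μ x := fun x => (hμ0 x).lt_of_ne fun h => by
    simp [eq_zero_of_vecMul_eq_self hnonneg hirr hμ0 hμ h.symm] at hμ1
  -- `ν - t • μ` with `t = min (ν / μ)` is a nonnegative stationary vector with a zero.
  obtain ⟨x₀, -, hx₀⟩ := exists_min_image univ (fun x => ν x / μ x) univ_nonempty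
  set t := ν x₀ / μ x₀
  have hw0 : ∀ x, 0 ≤ (ν - t • μ) x := fun x => by
    simpa using (le_div_iff₀ (hμpos x)).1 (hx₀ x (mem_univ x))
  have hw : (ν - t • μ) ᵥ* P = ν - t • μ := by
    rw [Matrix.sub_vecMul, Matrix.smul_vecMul, hμ, hν]
  have hνt : ∀ x, ν x = t * μ x := fun x => by
    simpa [sub_eq_zero] using eq_zero_of_vecMul_eq_self hnonneg hirr hw0 hw
      (z := x₀) (by simp [t, div_mul_cancel₀ _ (hμpos x₀).ne']) x
  have ht : t = 1 := by simpa [hνt, ← mul_sum, hμ1] using hν1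
  funext x
  rw [hνt, ht, one_mul]

lemma exists_isArborescence_forall_pos (z : Ω) :
    ∃ f : Ω → Ω, IsArborescence f z ∧ ∀ v, v ≠ z → 0 < P v (f v) := by
  have hd := fun v => hirr v z
  -- Step to a neighbour strictly closer to `z` in the number of steps needed to reach it.
  have hstep : ∀ v, v ≠ z → ∃ k, 0 < P v k ∧ Nat.find (hd k) < Nat.find (hd v) := by
    intro v hv
    obtain ⟨n, hn⟩ : ∃ n, Nat.find (hd v) = n + 1 := Nat.exists_eq_succ_of_ne_zero fun h0 => by
      simpa [h0, Matrix.one_apply_ne hv] using Nat.find_spec (hd v)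
    have hpos := Nat.find_spec (hd v)
    rw [hn, pow_succ', Matrix.mul_apply] at hpos
    obtain ⟨k, -, hk⟩ :=
      exists_lt_of_sum_lt (s := univ) (f := fun _ => (0 : ℝ)) (by simpa using hpos)
    obtain ⟨hvk, hkz⟩ := (pos_and_pos_or_neg_and_neg_of_mul_pos hk).resolve_right
      fun h => (hnonneg v k).not_gt h.1
    exact ⟨k, hvk, hn ▸ Nat.lt_succ_of_le (Nat.find_le hkz)⟩
  choose! next hnext_pos hnext_lt using hstep
  set f : Ω → Ω := fun v => if v = z then z else next v
  have hf : ∀ v, v ≠ z → f v = next v := fun v hv => if_neg hv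
  refine ⟨f, ⟨if_pos rfl, fun v => ?_⟩, fun v hv => hf v hv ▸ hnext_pos v hv⟩
  induction h : Nat.find (hd v) using Nat.strong_induction_on generalizing v with
  | _ n ih =>
    by_cases hv : v = z
    · exact ⟨0, hv⟩
    · obtain ⟨m, hm⟩ := ih _ (h ▸ hnext_lt v hv) (next v) rfl
      exact ⟨m + 1, by rw [Function.iterate_succ_apply, hf v hv, hm]⟩

lemma treeMass_pos (z : Ω) :
    0 < treeMass P z := by
  obtain ⟨f, hf, hpos⟩ := exists_isArborescence_forall_pos hnonneg hirr z
  exact sum_pos' (fun g _ => prod_nonneg fun v _ => hnonneg v (g v))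
    ⟨f, mem_arborescences.2 hf, prod_pos fun v hv => hpos v (ne_of_mem_erase hv)⟩

theorem eq_treeMass_div_of_vecMul_eq_self [Nonempty Ω] (hrow : ∀ x, ∑ y, P x y = 1) {μ : Ω → ℝ}
    (hμ0 : ∀ x, 0 ≤ μ x) (hμ1 : ∑ x, μ x = 1) (hμ : μ ᵥ* P = μ) (z : Ω) :
    μ z = treeMass P z / ∑ y, treeMass P y := by
  have hS : 0 < ∑ y, treeMass P y := sum_pos (fun y _ => treeMass_pos hnonneg hirr y) univ_nonempty
  have hμ_eq : μ = (∑ y, treeMass P y)⁻¹ • treeMass P := by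
    refine eq_of_vecMul_eq_self hnonneg hirr hμ0 hμ1 hμ ?_ ?_
    · simp [← mul_sum, inv_mul_cancel₀ hS.ne']
    · rw [Matrix.smul_vecMul, treeMass_vecMul hrow]
  simp [hμ_eq, div_eq_inv_mul]

end Stationary

section Asymptotics

lemma isTheta_of_eventually_le_of_le {α : Type*} {l : Filter α} {f g : α → ℝ} {c C : ℝ}
    (hc : 0 < c) (hg : ∀ᶠ x in l, 0 ≤ g x) (h : ∀ᶠ x in l, c * g x ≤ f x ∧ f x ≤ C * g x) :
    f =Θ[l] g := by
  refine ⟨IsBigO.of_bound C ?_, IsBigO.of_bound c⁻¹ ?_⟩ <;>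
    filter_upwards [hg, h] with x hgx ⟨hlo, hhi⟩ <;>
    rw [Real.norm_of_nonneg ((mul_nonneg hc.le hgx).trans hlo), Real.norm_of_nonneg hgx]
  · exact hhi
  · rwa [inv_mul_eq_div, le_div_iff₀ hc, mul_comm]

lemma rpow_isBigO_rpow_of_le {a b : ℝ} (hab : a ≤ b) :
    (fun ε : ℝ => ε ^ b) =O[𝓝[>] 0] fun ε => ε ^ a := by
  refine IsBigO.of_bound 1 ?_
  filter_upwards [Ioo_mem_nhdsGT one_pos] with ε ⟨hε0, hε1⟩
  rw [one_mul, Real.norm_of_nonneg (Real.rpow_nonneg hε0.le _),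
    Real.norm_of_nonneg (Real.rpow_nonneg hε0.le _)]
  exact Real.rpow_le_rpow_of_exponent_ge hε0 hε1.le hab

lemma isTheta_sum_rpow {ι : Type*} {s : Finset ι} {f : ι → ℝ → ℝ} {r : ι → ℝ} {i₀ : ι}
    (hi₀ : i₀ ∈ s) (hmin : ∀ i ∈ s, r i₀ ≤ r i) (hf0 : ∀ i ∈ s, ∀ᶠ ε in 𝓝[>] 0, 0 ≤ f i ε)
    (hf : ∀ i ∈ s, f i =Θ[𝓝[>] 0] fun ε => ε ^ r i) :
    (fun ε => ∑ i ∈ s, f i ε) =Θ[𝓝[>] 0] fun ε => ε ^ r i₀ := by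
  refine ⟨IsBigO.fun_sum fun i hi => (hf i hi).isBigO.trans (rpow_isBigO_rpow_of_le (hmin i hi)),
    (hf i₀ hi₀).symm.isBigO.trans (IsBigO.of_bound 1 ?_)⟩
  filter_upwards [(eventually_all_finset s).2 hf0] with ε hε
  rw [one_mul, Real.norm_of_nonneg (hε i₀ hi₀), Real.norm_of_nonneg (sum_nonneg hε)]
  exact single_le_sum hε hi₀

lemma zero_lt_liminf_iff_of_isTheta_rpow {u : ℝ → ℝ} {d : ℝ} (hd : 0 ≤ d)
    (hu0 : ∀ᶠ ε in 𝓝[>] 0, 0 ≤ u ε) (hu : u =Θ[𝓝[>] 0] fun ε => ε ^ d) :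
    0 < liminf u (𝓝[>] 0) ↔ d = 0 := by
  constructor
  · intro hpos
    by_contra hne
    have hrpow : Tendsto (fun ε : ℝ => ε ^ d) (𝓝[>] 0) (𝓝 0) := by
      simpa [Real.zero_rpow hne] using
        ((Real.continuousAt_rpow_const 0 d (Or.inr hd)).tendsto).mono_left nhdsWithin_le_nhds
    exact hpos.ne' (hu.isBigO.trans_tendsto hrpow).liminf_eq
  · rintro rfl
    simp only [Real.rpow_zero] at hu
    obtain ⟨b, hb, hbu⟩ := (isBigO_const_left_iff_pos_le_norm one_ne_zero).1 hu.symm.isBigO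
    obtain ⟨C, hC⟩ := hu.isBigO.bound
    have hcobdd : IsCoboundedUnder (· ≥ ·) (𝓝[>] 0) u :=
      isCoboundedUnder_ge_of_eventually_le _ <| hC.mono fun ε h =>
        (le_abs_self _).trans (by simpa using h)
    refine hb.trans_le (le_liminf_of_le hcobdd ?_)
    filter_upwards [hbu, hu0] with ε h1 h2
    rwa [Real.norm_of_nonneg h2] at h1

end Asymptotics

section Potential

def allowedArborescences (P : ℝ → Matrix Ω Ω ℝ) (z : Ω) : Finset (Ω → Ω) :=
  (arborescences z).filter fun f => ∀ v, v ≠ z → Allowed P v (f v)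

def arborescenceRes (res : Ω → Ω → ℝ) (z : Ω) (f : Ω → Ω) : ℝ := ∑ v ∈ univ.erase z, res v (f v)

/-- Young's stochastic potential of `z`. -/
def stochasticPotential (P : ℝ → Matrix Ω Ω ℝ) (res : Ω → Ω → ℝ) (z : Ω) : ℝ :=
  sInf (↑((allowedArborescences P z).image (arborescenceRes res z)) : Set ℝ)

def minStochasticPotential (P : ℝ → Matrix Ω Ω ℝ) (res : Ω → Ω → ℝ) : ℝ :=
  ⨅ z, stochasticPotential P res z

variable {P : ℝ → Matrix Ω Ω ℝ} {res : Ω → Ω → ℝ} {z : Ω}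

@[simp]
lemma mem_allowedArborescences {f : Ω → Ω} : f ∈ allowedArborescences P z ↔
    IsArborescence f z ∧ ∀ v, v ≠ z → Allowed P v (f v) := by
  simp [allowedArborescences]

lemma stochasticPotential_le {f : Ω → Ω} (hf : f ∈ allowedArborescences P z) :
    stochasticPotential P res z ≤ arborescenceRes res z f :=
  csInf_le (Finset.bddBelow _) (mem_coe.2 (mem_image_of_mem _ hf))

lemma exists_arborescenceRes_eq_stochasticPotential (hne : (allowedArborescences P z).Nonempty) :
    ∃ f ∈ allowedArborescences P z, arborescenceRes res z f = stochasticPotential P res z :=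
  mem_image.1 (hne.image _).csInf_mem

lemma minStochasticPotential_le (z : Ω) :
    minStochasticPotential P res ≤ stochasticPotential P res z :=
  ciInf_le (Set.finite_range _).bddBelow z

end Potential

section Trees

def arborescenceEdges (f : Ω → Ω) (z : Ω) : Finset (Ω × Ω) :=
  (univ.erase z).image fun v => (v, f v)

variable {P : ℝ → Matrix Ω Ω ℝ} {f : Ω → Ω} {z : Ω}

lemma mem_arborescenceEdges {p : Ω × Ω} : p ∈ arborescenceEdges f z ↔ p.1 ≠ z ∧ p.2 = f p.1 := by
  obtain ⟨a, b⟩ := p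
  simp [arborescenceEdges, eq_comm]

lemma treeRes_arborescenceEdges (res : Ω → Ω → ℝ) (f : Ω → Ω) (z : Ω) :
    treeRes res (arborescenceEdges f z) = arborescenceRes res z f :=
  sum_image fun _ _ _ _ h => congrArg Prod.fst h

lemma exists_pathOK_arborescenceEdges :
    ∀ {n : ℕ} {w : Ω}, f^[n] w = z → ∃ l, pathOK ↑(arborescenceEdges f z) w z l
  | 0, _, hw => ⟨[], hw⟩
  | n + 1, w, hw => by
    by_cases h : w = z
    · exact ⟨[], h⟩
    · obtain ⟨l, hl⟩ := exists_pathOK_arborescenceEdges (n := n) hw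
      exact ⟨f w :: l, mem_arborescenceEdges.2 ⟨h, rfl⟩, hl⟩

lemma pathOK_arborescenceEdges_unique :
    ∀ {l₁ l₂ : List Ω} {w : Ω}, pathOK ↑(arborescenceEdges f z) w z l₁ →
      pathOK ↑(arborescenceEdges f z) w z l₂ → l₁ = l₂
  | [], [], _, _, _ => rfl
  | [], _ :: _, _, h₁, h₂ => absurd h₁ (mem_arborescenceEdges.1 h₂.1).1
  | _ :: _, [], _, h₁, h₂ => absurd h₂ (mem_arborescenceEdges.1 h₁.1).1
  | b₁ :: t₁, b₂ :: t₂, w, h₁, h₂ => by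
    obtain rfl : b₁ = f w := (mem_arborescenceEdges.1 h₁.1).2
    obtain rfl : b₂ = f w := (mem_arborescenceEdges.1 h₂.1).2
    rw [pathOK_arborescenceEdges_unique h₁.2 h₂.2]

lemma IsArborescence.isRootedTree_arborescenceEdges (hf : IsArborescence f z)
    (hall : ∀ v, v ≠ z → Allowed P v (f v)) : IsRootedTree P (arborescenceEdges f z) z := by
  refine ⟨fun p hp => ?_, fun w _ => ?_⟩
  · obtain ⟨hp1, hp2⟩ := mem_arborescenceEdges.1 hp
    exact hp2 ▸ hall p.1 hp1
  · obtain ⟨l, hl⟩ := exists_pathOK_arborescenceEdges (hf.2 w).choose_spec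
    exact ⟨l, hl, fun l' hl' => pathOK_arborescenceEdges_unique hl' hl⟩

lemma IsRootedTree.exists_isArborescence {T : Finset (Ω × Ω)} (hT : IsRootedTree P T z) :
    ∃ f : Ω → Ω, IsArborescence f z ∧ arborescenceEdges f z ⊆ T := by
  choose! path hpath huniq using hT.2
  -- Each vertex `w ≠ z` moves to the first step of its unique path to `z`.
  set f : Ω → Ω := fun w => if w = z then z else (path w).headD z
  have hstep : ∀ w, w ≠ z → ∀ b t, pathOK ↑T w z (b :: t) → f w = b := fun w hw b t h => by
    simp [f, hw, ← huniq w hw _ h]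
  have hedge : ∀ w, w ≠ z → (w, f w) ∈ T := fun w hw => by
    have h := hpath w hw
    cases hl : path w with
    | nil => rw [hl] at h; exact absurd h hw
    | cons b t => rw [hl] at h; rw [hstep w hw b t h]; exact h.1
  have hreach : ∀ (l : List Ω) (w : Ω), pathOK ↑T w z l → ∃ n, f^[n] w = z := by
    intro l
    induction l with
    | nil => exact fun w hw => ⟨0, hw⟩
    | cons b t ih =>
      intro w hw
      by_cases h : w = z
      · exact ⟨0, h⟩
      · obtain ⟨n, hn⟩ := ih b hw.2
        exact ⟨n + 1, by rw [Function.iterate_succ_apply, hstep w h b t hw, hn]⟩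
  refine ⟨f, ⟨if_pos rfl, fun w => ?_⟩, image_subset_iff.2 fun w hw => hedge w (ne_of_mem_erase hw)⟩
  by_cases h : w = z
  · exact ⟨0, h⟩
  · exact hreach _ w (hpath w h)

end Trees

structure IsRegularPerturbation (P : ℝ → Matrix Ω Ω ℝ) (res : Ω → Ω → ℝ) : Prop where
  stochastic : ∀ ε ≥ (0 : ℝ), (∀ x y, 0 ≤ P ε x y) ∧ (∀ x, ∑ y, P ε x y = 1)
  irreducible : ∀ ε > (0 : ℝ), ∀ x y : Ω, ∃ n : ℕ, 0 < ((P ε) ^ n) x y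
  tendsto : ∀ x y : Ω, Tendsto (fun ε => P ε x y) (𝓝[>] 0) (𝓝 (P 0 x y))
  regular : ∀ x y : Ω, (∀ ε > (0 : ℝ), 0 < P ε x y) ∨ (∀ ε > (0 : ℝ), P ε x y = 0)
  res_eq_zero : ∀ x y : Ω, 0 < P 0 x y → res x y = 0
  bounds : ∀ x y : Ω, P 0 x y = 0 → (∀ ε > (0 : ℝ), 0 < P ε x y) →
    0 < res x y ∧ ∃ c C : ℝ, 0 < c ∧ 0 < C ∧
      ∀ᶠ ε in 𝓝[>] 0, c * ε ^ res x y ≤ P ε x y ∧ P ε x y ≤ C * ε ^ res x y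

namespace IsRegularPerturbation

variable {P : ℝ → Matrix Ω Ω ℝ} {res : Ω → Ω → ℝ} (hP : IsRegularPerturbation P res)
include hP

lemma pos_of_allowed {x y : Ω} (h : Allowed P x y) {ε : ℝ} (hε : 0 < ε) : 0 < P ε x y := by
  obtain ⟨ε₀, hε₀, hpos⟩ := h
  exact (hP.regular x y).resolve_right (fun h0 => hpos.ne' (h0 ε₀ hε₀)) ε hε

lemma res_nonneg {x y : Ω} (h : Allowed P x y) : 0 ≤ res x y := by
  rcases ((hP.stochastic 0 le_rfl).1 x y).lt_or_eq with h0 | h0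
  · exact (hP.res_eq_zero x y h0).ge
  · exact (hP.bounds x y h0.symm fun _ => hP.pos_of_allowed h).1.le

lemma isTheta_of_allowed {x y : Ω} (h : Allowed P x y) :
    (fun ε => P ε x y) =Θ[𝓝[>] 0] fun ε => ε ^ res x y := by
  have hrpow : ∀ᶠ ε in 𝓝[>] (0 : ℝ), 0 ≤ ε ^ res x y :=
    eventually_mem_nhdsWithin.mono fun ε hε => Real.rpow_nonneg (le_of_lt hε) _
  rcases ((hP.stochastic 0 le_rfl).1 x y).lt_or_eq with h0 | h0
  · refine isTheta_of_eventually_le_of_le (C := 1) (half_pos h0) hrpow ?_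
    filter_upwards [(hP.tendsto x y).eventually (lt_mem_nhds (half_lt_self h0)),
      eventually_mem_nhdsWithin] with ε hlo hε
    have hstoch := hP.stochastic ε (le_of_lt hε)
    rw [hP.res_eq_zero x y h0, Real.rpow_zero, mul_one, mul_one]
    exact ⟨hlo.le, (single_le_sum (fun y _ => hstoch.1 x y) (mem_univ y)).trans_eq (hstoch.2 x)⟩
  · obtain ⟨-, c, C, hc, -, hbounds⟩ := hP.bounds x y h0.symm fun _ => hP.pos_of_allowed h
    exact isTheta_of_eventually_le_of_le hc hrpow hbounds

lemma allowedArborescences_nonempty (z : Ω) : (allowedArborescences P z).Nonempty := by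
  obtain ⟨f, hf, hpos⟩ := exists_isArborescence_forall_pos (hP.stochastic 1 zero_le_one).1
    (hP.irreducible 1 one_pos) z
  exact ⟨f, mem_allowedArborescences.2 ⟨hf, fun v hv => ⟨1, one_pos, hpos v hv⟩⟩⟩

lemma treeMass_eq_sum_allowedArborescences {ε : ℝ} (hε : 0 < ε) (z : Ω) :
    treeMass (P ε) z = ∑ f ∈ allowedArborescences P z, arborescenceWeight (P ε) z f := by
  refine (sum_subset (filter_subset _ _) fun f hf hnot => ?_).symm
  obtain ⟨v, hv, hna⟩ : ∃ v, v ≠ z ∧ ¬Allowed P v (f v) := by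
    simpa [mem_arborescences.1 hf] using hnot
  exact prod_eq_zero (mem_erase.2 ⟨hv, mem_univ v⟩) <|
    le_antisymm (not_lt.1 fun h => hna ⟨ε, hε, h⟩) ((hP.stochastic ε hε.le).1 _ _)

lemma isTheta_arborescenceWeight {z : Ω} {f : Ω → Ω} (hf : f ∈ allowedArborescences P z) :
    (fun ε => arborescenceWeight (P ε) z f) =Θ[𝓝[>] 0]
      fun ε => ε ^ arborescenceRes res z f := by
  have hall := (mem_allowedArborescences.1 hf).2
  refine (IsTheta.finsetProd fun v hv =>
    hP.isTheta_of_allowed (hall v (ne_of_mem_erase hv))).trans_eventuallyEq ?_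
  filter_upwards [eventually_mem_nhdsWithin] with ε hε
  exact (Real.rpow_sum_of_pos hε _ _).symm

lemma isTheta_treeMass (z : Ω) :
    (fun ε => treeMass (P ε) z) =Θ[𝓝[>] 0] fun ε => ε ^ stochasticPotential P res z := by
  obtain ⟨f₀, hf₀, hmin⟩ :=
    exists_arborescenceRes_eq_stochasticPotential (res := res) (hP.allowedArborescences_nonempty z)
  rw [← hmin]
  refine EventuallyEq.trans_isTheta ?_ (isTheta_sum_rpow hf₀
    (fun f hf => hmin.trans_le (stochasticPotential_le hf)) (fun f _ => ?_)
    fun f hf => hP.isTheta_arborescenceWeight hf)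
  · filter_upwards [eventually_mem_nhdsWithin] with ε hε
      using hP.treeMass_eq_sum_allowedArborescences hε z
  · filter_upwards [eventually_mem_nhdsWithin] with ε hε
      using prod_nonneg fun v _ => (hP.stochastic ε (le_of_lt hε)).1 _ _

lemma isTheta_sum_treeMass [Nonempty Ω] :
    (fun ε => ∑ y, treeMass (P ε) y) =Θ[𝓝[>] 0] fun ε => ε ^ minStochasticPotential P res := by
  obtain ⟨z, hz⟩ := exists_eq_ciInf_of_finite (f := stochasticPotential P res)
  rw [minStochasticPotential, ← hz]
  refine isTheta_sum_rpow (mem_univ z) (fun y _ => hz ▸ minStochasticPotential_le y)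
    (fun y _ => ?_) fun y _ => hP.isTheta_treeMass y
  filter_upwards [eventually_mem_nhdsWithin] with ε hε
  exact (treeMass_pos (hP.stochastic ε (le_of_lt hε)).1 (hP.irreducible ε hε) y).le

lemma isTheta_stationary {μ : ℝ → Ω → ℝ}
    (hμ : ∀ ε > (0 : ℝ), (∀ x, 0 ≤ μ ε x) ∧ (∑ x, μ ε x = 1) ∧
      (∀ y, ∑ x, μ ε x * P ε x y = μ ε y)) (z : Ω) :
    (fun ε => μ ε z) =Θ[𝓝[>] 0]
      fun ε => ε ^ (stochasticPotential P res z - minStochasticPotential P res) := by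
  have : Nonempty Ω := ⟨z⟩
  have hμ_eq : (fun ε => μ ε z) =ᶠ[𝓝[>] 0] fun ε => treeMass (P ε) z / ∑ y, treeMass (P ε) y := by
    filter_upwards [eventually_mem_nhdsWithin] with ε hε
    obtain ⟨h0, h1, hst⟩ := hμ ε hε
    exact eq_treeMass_div_of_vecMul_eq_self (hP.stochastic ε (le_of_lt hε)).1
      (hP.irreducible ε hε) (hP.stochastic ε (le_of_lt hε)).2 h0 h1 (funext hst) z
  refine hμ_eq.trans_isTheta
    (((hP.isTheta_treeMass z).div hP.isTheta_sum_treeMass).trans_eventuallyEq ?_)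
  filter_upwards [eventually_mem_nhdsWithin] with ε hε
  exact (Real.rpow_sub hε _ _).symm

theorem zero_lt_liminf_stationary_iff {μ : ℝ → Ω → ℝ}
    (hμ : ∀ ε > (0 : ℝ), (∀ x, 0 ≤ μ ε x) ∧ (∑ x, μ ε x = 1) ∧
      (∀ y, ∑ x, μ ε x * P ε x y = μ ε y)) (z : Ω) :
    0 < liminf (fun ε => μ ε z) (𝓝[>] 0) ↔
      stochasticPotential P res z = minStochasticPotential P res := by
  rw [zero_lt_liminf_iff_of_isTheta_rpow (sub_nonneg.2 (minStochasticPotential_le z)) ?_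
    (hP.isTheta_stationary hμ z), sub_eq_zero]
  filter_upwards [eventually_mem_nhdsWithin] with ε hε using (hμ ε hε).1 z

lemma exists_isRootedTree_treeRes_eq (z : Ω) :
    ∃ T, IsRootedTree P T z ∧ treeRes res T = stochasticPotential P res z := by
  obtain ⟨f, hf, hmin⟩ :=
    exists_arborescenceRes_eq_stochasticPotential (res := res) (hP.allowedArborescences_nonempty z)
  obtain ⟨hf_arb, hf_all⟩ := mem_allowedArborescences.1 hf
  exact ⟨_, hf_arb.isRootedTree_arborescenceEdges hf_all,
    (treeRes_arborescenceEdges res f z).trans hmin⟩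

lemma stochasticPotential_le_treeRes {T : Finset (Ω × Ω)} {z : Ω} (hT : IsRootedTree P T z) :
    stochasticPotential P res z ≤ treeRes res T := by
  obtain ⟨f, hf, hsub⟩ := hT.exists_isArborescence
  have hall : ∀ v, v ≠ z → Allowed P v (f v) := fun v hv =>
    hT.1 (v, f v) (hsub (mem_arborescenceEdges.2 ⟨hv, rfl⟩))
  calc stochasticPotential P res z ≤ arborescenceRes res z f :=
        stochasticPotential_le (mem_allowedArborescences.2 ⟨hf, hall⟩)
    _ = treeRes res (arborescenceEdges f z) := (treeRes_arborescenceEdges res f z).symm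
    _ ≤ treeRes res T := sum_le_sum_of_subset_of_nonneg hsub fun p hp _ => hP.res_nonneg (hT.1 p hp)

theorem exists_minimal_isRootedTree_iff (z : Ω) :
    (∃ T, IsRootedTree P T z ∧
        ∀ z' T', IsRootedTree P T' z' → treeRes res T ≤ treeRes res T') ↔
      stochasticPotential P res z = minStochasticPotential P res := by
  have : Nonempty Ω := ⟨z⟩
  constructor
  · rintro ⟨T, hT, hmin⟩
    obtain ⟨z', hz'⟩ := exists_eq_ciInf_of_finite (f := stochasticPotential P res)
    obtain ⟨T', hT', hres'⟩ := hP.exists_isRootedTree_treeRes_eq z'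
    refine le_antisymm ?_ (minStochasticPotential_le z)
    calc stochasticPotential P res z ≤ treeRes res T := hP.stochasticPotential_le_treeRes hT
      _ ≤ treeRes res T' := hmin z' T' hT'
      _ = minStochasticPotential P res := hres'.trans hz'
  · intro hz
    obtain ⟨T, hT, hres⟩ := hP.exists_isRootedTree_treeRes_eq z
    refine ⟨T, hT, fun z' T' hT' => ?_⟩
    calc treeRes res T = minStochasticPotential P res := hres.trans hz
      _ ≤ stochasticPotential P res z' := minStochasticPotential_le z'
      _ ≤ treeRes res T' := hP.stochasticPotential_le_treeRes hT'

end IsRegularPerturbation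

theorem stochastically_stable_iff_min_resistance_tree_general
    (P : ℝ → Matrix Ω Ω ℝ) (res : Ω → Ω → ℝ)
    -- each `P ε` (ε ≥ 0) is a Markov transition matrix
    (hstoch : ∀ ε ≥ (0 : ℝ), (∀ x y, 0 ≤ P ε x y) ∧ (∀ x, ∑ y, P ε x y = 1))
    -- for `ε > 0`, `P ε` is irreducible
    (hirr : ∀ ε > (0 : ℝ), ∀ x y : Ω, ∃ n : ℕ, 0 < ((P ε) ^ n) x y)
    -- `P ε → P 0` entrywise as `ε → 0⁺`
    (hlim : ∀ x y : Ω, Tendsto (fun ε => P ε x y) (nhdsWithin 0 (Set.Ioi 0)) (nhds (P 0 x y)))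
    -- regularity: each transition is either possible for all `ε > 0` or forbidden for all
    (hreg : ∀ x y : Ω, (∀ ε > (0 : ℝ), 0 < P ε x y) ∨ (∀ ε > (0 : ℝ), P ε x y = 0))
    -- transitions possible in the unperturbed chain have resistance `0`
    (hres0 : ∀ x y : Ω, 0 < P 0 x y → res x y = 0)
    -- non-forbidden transitions with `P⁰_{xy} = 0` have positive resistance `res x y`
    -- and satisfy `P^ε_{xy} = Θ(ε^{res x y})` as `ε → 0⁺`
    (hresTheta : ∀ x y : Ω, P 0 x y = 0 → (∀ ε > (0 : ℝ), 0 < P ε x y) →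
      0 < res x y ∧ ∃ c C : ℝ, 0 < c ∧ 0 < C ∧
        ∀ᶠ ε in nhdsWithin (0 : ℝ) (Set.Ioi 0),
          c * ε ^ res x y ≤ P ε x y ∧ P ε x y ≤ C * ε ^ res x y)
    -- `μ ε` is the (unique) stationary distribution of `P ε` for `ε > 0`
    (μ : ℝ → Ω → ℝ)
    (hμ : ∀ ε > (0 : ℝ), (∀ x, 0 ≤ μ ε x) ∧ (∑ x, μ ε x = 1) ∧
      (∀ y, ∑ x, μ ε x * P ε x y = μ ε y))
    (z : Ω) :
    0 < liminf (fun ε => μ ε z) (nhdsWithin (0 : ℝ) (Set.Ioi 0)) ↔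
      ∃ T : Finset (Ω × Ω), IsRootedTree P T z ∧
        ∀ (z' : Ω) (T' : Finset (Ω × Ω)), IsRootedTree P T' z' →
          treeRes res T ≤ treeRes res T' := by
  have hP : IsRegularPerturbation P res := ⟨hstoch, hirr, hlim, hreg, hres0, hresTheta⟩
  exact (hP.zero_lt_liminf_stationary_iff hμ z).trans (hP.exists_minimal_isRootedTree_iff z).symm

/-- **Young's characterization.** For a regular perturbed Markov process
`(P^ε)_{ε ≥ 0}` on a finite set `Ω` with stationary distributions `μ^ε`, a state `z` is
stochastically stable iff some tree rooted at `z` has minimal resistance among all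
rooted trees (over all possible roots). -/
theorem stochastically_stable_iff_min_resistance_tree
    [Nonempty Ω]
    (P : ℝ → Matrix Ω Ω ℝ) (res : Ω → Ω → ℝ)
    -- each `P ε` (ε ≥ 0) is a Markov transition matrix
    (hstoch : ∀ ε ≥ (0 : ℝ), (∀ x y, 0 ≤ P ε x y) ∧ (∀ x, ∑ y, P ε x y = 1))
    -- for `ε > 0`, `P ε` is irreducible
    (hirr : ∀ ε > (0 : ℝ), ∀ x y : Ω, ∃ n : ℕ, 0 < ((P ε) ^ n) x y)
    -- ... and aperiodic
    (haper : ∀ ε > (0 : ℝ), ∀ x : Ω, ∃ m : ℕ, ∀ n ≥ m, 0 < ((P ε) ^ n) x x)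
    -- `P ε → P 0` entrywise as `ε → 0⁺`
    (hlim : ∀ x y : Ω, Tendsto (fun ε => P ε x y) (nhdsWithin 0 (Set.Ioi 0)) (nhds (P 0 x y)))
    -- regularity: each transition is either possible for all `ε > 0` or forbidden for all
    (hreg : ∀ x y : Ω, (∀ ε > (0 : ℝ), 0 < P ε x y) ∨ (∀ ε > (0 : ℝ), P ε x y = 0))
    -- transitions possible in the unperturbed chain have resistance `0`
    (hres0 : ∀ x y : Ω, 0 < P 0 x y → res x y = 0)
    -- non-forbidden transitions with `P⁰_{xy} = 0` have positive resistance `res x y`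
    -- and satisfy `P^ε_{xy} = Θ(ε^{res x y})` as `ε → 0⁺`
    (hresTheta : ∀ x y : Ω, P 0 x y = 0 → (∀ ε > (0 : ℝ), 0 < P ε x y) →
      0 < res x y ∧ ∃ c C : ℝ, 0 < c ∧ 0 < C ∧
        ∀ᶠ ε in nhdsWithin (0 : ℝ) (Set.Ioi 0),
          c * ε ^ res x y ≤ P ε x y ∧ P ε x y ≤ C * ε ^ res x y)
    -- `μ ε` is the (unique) stationary distribution of `P ε` for `ε > 0`
    (μ : ℝ → Ω → ℝ)
    (hμ : ∀ ε > (0 : ℝ), (∀ x, 0 ≤ μ ε x) ∧ (∑ x, μ ε x = 1) ∧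
      (∀ y, ∑ x, μ ε x * P ε x y = μ ε y))
    (z : Ω) :
    0 < liminf (fun ε => μ ε z) (nhdsWithin (0 : ℝ) (Set.Ioi 0)) ↔
      ∃ T : Finset (Ω × Ω), IsRootedTree P T z ∧
        ∀ (z' : Ω) (T' : Finset (Ω × Ω)), IsRootedTree P T' z' →
          treeRes res T ≤ treeRes res T' :=
  stochastically_stable_iff_min_resistance_tree_general P res hstoch hirr hlim hreg hres0 hresTheta
    μ hμ z

end Young
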